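/- arXiv:1004.1823 — 5 statements merged into one kernel-verified Lean document; each statement's English description precedes it below -/
import Mathlib

section
/- Let X be a nonempty subset of the cluster T_r and let m(X) denote the mean of the points {A_i : i ∈ X}. Then |m(X) − μ_r| ≤ ‖A−C‖ / √|X|. -/
/-
Let `1_X` be the indicator vector of `X`. Then `∑_{i ∈ X} (A_i - C_i) = (A - C)ᵀ 1_X`, and
`‖(A - C)ᵀ‖ = ‖A - C‖` while `|1_X| = √|X|`, so this sum has norm at most `√|X| ‖A - C‖`.
Since `C_i = μ_r` on `X`, the sum equals `|X| (m(X) - μ_r)`.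
-/

open scoped BigOperators

noncomputable section

/-- Points of `ℝ^d` with the Euclidean norm. -/
abbrev Pt (d : ℕ) := EuclideanSpace ℝ (Fin d)

/-- The spectral (operator) norm of a real `n × d` matrix, viewed as a linear map
between Euclidean spaces. -/
def specNorm {n d : ℕ} (M : Matrix (Fin n) (Fin d) ℝ) : ℝ :=
  ‖LinearMap.toContinuousLinearMap (Matrix.toEuclideanLin M)‖

/-- The `n × d` matrix whose `i`-th row is `p i - q i`. -/
def diffM {n d : ℕ} (p q : Fin n → Pt d) : Matrix (Fin n) (Fin d) ℝ :=
  Matrix.of fun i j => p i j - q i j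

/-- The mean of the points `p i`, `i ∈ X`. -/
def fmean {n d : ℕ} (p : Fin n → Pt d) (X : Finset (Fin n)) : Pt d :=
  (X.card : ℝ)⁻¹ • ∑ i ∈ X, p i

section

open Matrix WithLp
open scoped Matrix.Norms.L2Operator

variable {n d : ℕ}

theorem specNorm_eq_l2_opNorm (M : Matrix (Fin n) (Fin d) ℝ) : specNorm M = ‖M‖ := rfl

theorem norm_vecMul_le_specNorm_mul (M : Matrix (Fin n) (Fin d) ℝ) (v : Fin n → ℝ) :
    ‖toLp 2 (v ᵥ* M)‖ ≤ specNorm M * ‖toLp 2 v‖ := by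
  have hT : ‖Mᵀ‖ = ‖M‖ := by
    rw [← conjTranspose_eq_transpose_of_trivial, l2_opNorm_conjTranspose]
  rw [specNorm_eq_l2_opNorm, ← hT, ← mulVec_transpose]
  exact l2_opNorm_mulVec Mᵀ (toLp 2 v)

theorem toLp_vecMul_diffM (p q : Fin n → Pt d) (v : Fin n → ℝ) :
    toLp 2 (v ᵥ* diffM p q) = ∑ i, v i • (p i - q i) := by
  ext j
  simp [vecMul, dotProduct, diffM]

theorem norm_toLp_indicator_one (X : Finset (Fin n)) :
    ‖toLp 2 ((X : Set (Fin n)).indicator (1 : Fin n → ℝ))‖ = √X.card := by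
  rw [EuclideanSpace.norm_eq]
  congr 1
  simp [Set.indicator_apply]

theorem norm_sum_sub_le_sqrt_card_mul_specNorm (p q : Fin n → Pt d) (X : Finset (Fin n)) :
    ‖∑ i ∈ X, (p i - q i)‖ ≤ √X.card * specNorm (diffM p q) := by
  have h := norm_vecMul_le_specNorm_mul (diffM p q) ((X : Set (Fin n)).indicator 1)
  rw [toLp_vecMul_diffM, norm_toLp_indicator_one, mul_comm] at h
  convert h using 2
  simp [Set.indicator_apply, ite_smul]

theorem fmean_sub_eq_inv_card_smul_sum_sub {p q : Fin n → Pt d} {X : Finset (Fin n)} {c : Pt d}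
    (hq : ∀ i ∈ X, q i = c) (hX : X.Nonempty) :
    fmean p X - c = (X.card : ℝ)⁻¹ • ∑ i ∈ X, (p i - q i) := by
  have hcard : (X.card : ℝ) ≠ 0 := by exact_mod_cast hX.card_pos.ne'
  rw [Finset.sum_sub_distrib, Finset.sum_congr rfl hq, Finset.sum_const, ← Nat.cast_smul_eq_nsmul ℝ,
    smul_sub, smul_smul, inv_mul_cancel₀ hcard, one_smul, fmean]

theorem norm_fmean_sub_le {p q : Fin n → Pt d} {X : Finset (Fin n)} {c : Pt d}
    (hq : ∀ i ∈ X, q i = c) (hX : X.Nonempty) :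
    ‖fmean p X - c‖ ≤ specNorm (diffM p q) / √X.card := by
  calc ‖fmean p X - c‖ = (X.card : ℝ)⁻¹ * ‖∑ i ∈ X, (p i - q i)‖ := by
        rw [fmean_sub_eq_inv_card_smul_sum_sub hq hX, norm_smul, Real.norm_of_nonneg (by positivity)]
    _ ≤ (X.card : ℝ)⁻¹ * (√X.card * specNorm (diffM p q)) := by
        gcongr; exact norm_sum_sub_le_sqrt_card_mul_specNorm p q X
    _ = specNorm (diffM p q) / √X.card := by
        rw [← mul_assoc, inv_mul_eq_div, Real.sqrt_div_self', one_div_mul_eq_div]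

end

theorem mean_close_to_cluster_center_general
    {n d k : ℕ} (A C : Fin n → Pt d) (T : Fin k → Finset (Fin n))
    (μ : Fin k → Pt d)
    (hC : ∀ i r, i ∈ T r → C i = μ r)
    (r : Fin k) (X : Finset (Fin n)) (hXsub : X ⊆ T r) (hXne : X.Nonempty) :
    ‖fmean A X - μ r‖ ≤ specNorm (diffM A C) / Real.sqrt X.card :=
  norm_fmean_sub_le (fun i hi => hC i r (hXsub hi)) hXne

theorem mean_close_to_cluster_center
    {n d k : ℕ} (A C : Fin n → Pt d) (T : Fin k → Finset (Fin n))
    (μ : Fin k → Pt d)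
    (hpart : ∀ i, ∃! r, i ∈ T r)
    (hμ : ∀ r, μ r = fmean A (T r))
    (hC : ∀ i r, i ∈ T r → C i = μ r)
    (r : Fin k) (X : Finset (Fin n)) (hXsub : X ⊆ T r) (hXne : X.Nonempty) :
    ‖fmean A X - μ r‖ ≤ specNorm (diffM A C) / Real.sqrt X.card :=
  mean_close_to_cluster_center_general A C T μ hC r X hXsub hXne
end
end

section
/- Let μ_r, μ_s, ν_r, ν_s, x ∈ ℝ^d with μ_r ≠ μ_s, let Δ > 0 with Δ ≤ |μ_r − μ_s|, and set δ = |ν_r − μ_r| + |ν_s − μ_s|, assuming 0 < δ ≤ Δ/16. Suppose that (i) the orthogonal projection x̂ of x onto the line through μ_r and μ_s satisfies |x̂ − μ_s| − |x̂ − μ_r| ≥ Δ (i.e., x̂ is at least Δ closer to μ_r than to μ_s), and (ii) x is at least as close to ν_s as to ν_r, i.e., |x − ν_s| ≤ |x − ν_r|. Then |x − μ_r| ≥ Δ·|μ_r − μ_s| / (64·δ). -/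
open scoped BigOperators

noncomputable section

/-- The orthogonal projection of `x` onto the line through `a` and `b`. -/
def lineProj {d : ℕ} (a b x : Pt d) : Pt d :=
  a + ((inner ℝ (x - a) (b - a) : ℝ) / ‖b - a‖ ^ 2) • (b - a)

/-!
For points `a, b` the difference `‖y - a‖² - ‖y - b‖² = ⟪2y - a - b, b - a⟫` is affine in `y` and
constant along directions orthogonal to `b - a`, so projecting `x` onto the line `μr μs` does not
change it. Hypothesis (i) thus gives `⟪2x - μs - μr, μr - μs⟫ ≥ Δ‖μr - μs‖`, while (ii) says the
same quantity formed with the `ν`'s is `≤ 0`. Passing from the `μ`'s to the `ν`'s changes it by at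
most `δ (2‖x - μr‖ + 2‖μr - μs‖ + δ)`, and since `δ ≤ Δ/16` only the term `2δ‖x - μr‖` can
absorb most of `Δ‖μr - μs‖`.
-/

open RealInnerProductSpace

theorem mul_norm_sub_le_norm_sub_sq_sub_norm_sub_sq {E : Type*} [SeminormedAddCommGroup E]
    {Δ : ℝ} (hΔ : 0 ≤ Δ) {y a b : E} (h : Δ ≤ ‖y - b‖ - ‖y - a‖) :
    Δ * ‖a - b‖ ≤ ‖y - b‖ ^ 2 - ‖y - a‖ ^ 2 := by
  have htri : ‖a - b‖ ≤ ‖y - a‖ + ‖y - b‖ := by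
    linarith [norm_sub_le_norm_sub_add_norm_sub a y b, norm_sub_rev a y]
  nlinarith [norm_nonneg (y - a), norm_nonneg (y - b)]

section
variable {E : Type*} [NormedAddCommGroup E] [InnerProductSpace ℝ E]

theorem norm_sub_sq_sub_norm_sub_sq (x a b : E) :
    ‖x - a‖ ^ 2 - ‖x - b‖ ^ 2 = ⟪(2 : ℝ) • x - a - b, b - a⟫ := by
  simp only [norm_sub_sq_real, inner_sub_left, inner_sub_right, real_inner_smul_left,
    real_inner_self_eq_norm_sq, real_inner_comm a b]
  ring

theorem real_inner_sub_real_inner_le (u w u' w' : E) :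
    ⟪u, w⟫ - ⟪u', w'⟫ ≤ ‖u‖ * ‖w - w'‖ + ‖u - u'‖ * ‖w'‖ := by
  have h : ⟪u, w⟫ - ⟪u', w'⟫ = ⟪u, w - w'⟫ + ⟪u - u', w'⟫ := by
    simp only [inner_sub_left, inner_sub_right]; ring
  rw [h]
  exact add_le_add (real_inner_le_norm _ _) (real_inner_le_norm _ _)

end

theorem inner_sub_lineProj {d : ℕ} (a b x : Pt d) : ⟪x - lineProj a b x, b - a⟫ = 0 := by
  rcases eq_or_ne b a with rfl | hba
  · simp
  have hnorm : ‖b - a‖ ≠ 0 := norm_ne_zero_iff.2 (sub_ne_zero.2 hba)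
  rw [lineProj, sub_add_eq_sub_sub, inner_sub_left, real_inner_smul_left,
    real_inner_self_eq_norm_sq]
  field_simp
  ring

theorem norm_lineProj_sub_sq_sub_norm_lineProj_sub_sq {d : ℕ} (a b x : Pt d) :
    ‖lineProj a b x - b‖ ^ 2 - ‖lineProj a b x - a‖ ^ 2 = ‖x - b‖ ^ 2 - ‖x - a‖ ^ 2 := by
  rw [norm_sub_sq_sub_norm_sub_sq, norm_sub_sq_sub_norm_sub_sq,
    show (2 : ℝ) • x - b - a = ((2 : ℝ) • lineProj a b x - b - a) + (2 : ℝ) • (x - lineProj a b x)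
      by module,
    inner_add_left, real_inner_smul_left, ← neg_sub b a]
  simp only [inner_neg_right, inner_sub_lineProj]
  ring

theorem misclassified_point_far_from_center_general
    {d : ℕ} (μr μs νr νs x : Pt d) (Δ : ℝ)
    (hΔpos : 0 < Δ) (hΔle : Δ ≤ ‖μr - μs‖)
    (hδpos : 0 < ‖νr - μr‖ + ‖νs - μs‖)
    (hδle : ‖νr - μr‖ + ‖νs - μs‖ ≤ Δ / 16)
    (hprox : ‖lineProj μr μs x - μs‖ - ‖lineProj μr μs x - μr‖ ≥ Δ)
    (hassign : ‖x - νs‖ ≤ ‖x - νr‖) :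
    ‖x - μr‖ ≥ Δ * ‖μr - μs‖ / (64 * (‖νr - μr‖ + ‖νs - μs‖)) := by
  set δ := ‖νr - μr‖ + ‖νs - μs‖
  have hfar : Δ * ‖μr - μs‖ ≤ ⟪(2 : ℝ) • x - μs - μr, μr - μs⟫ := by
    rw [← norm_sub_sq_sub_norm_sub_sq, ← norm_lineProj_sub_sq_sub_norm_lineProj_sub_sq]
    exact mul_norm_sub_le_norm_sub_sq_sub_norm_sub_sq hΔpos.le hprox
  have hnear : ⟪(2 : ℝ) • x - νs - νr, νr - νs⟫ ≤ 0 := by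
    rw [← norm_sub_sq_sub_norm_sub_sq, sub_nonpos]
    gcongr
  have hpert := real_inner_sub_real_inner_le ((2 : ℝ) • x - μs - μr) (μr - μs)
    ((2 : ℝ) • x - νs - νr) (νr - νs)
  have hu : ‖(2 : ℝ) • x - μs - μr‖ ≤ 2 * ‖x - μr‖ + ‖μr - μs‖ := by
    rw [show (2 : ℝ) • x - μs - μr = (2 : ℝ) • (x - μr) + (μr - μs) by module]
    exact (norm_add_le _ _).trans_eq (by rw [norm_smul, Real.norm_two])
  have hdu : ‖(2 : ℝ) • x - μs - μr - ((2 : ℝ) • x - νs - νr)‖ ≤ δ := by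
    rw [show (2 : ℝ) • x - μs - μr - ((2 : ℝ) • x - νs - νr) = (νr - μr) + (νs - μs) by abel]
    exact norm_add_le _ _
  have hdw : ‖μr - μs - (νr - νs)‖ ≤ δ := by
    rw [show μr - μs - (νr - νs) = (νs - μs) - (νr - μr) by abel]
    exact (norm_sub_le _ _).trans_eq (add_comm _ _)
  have hw : ‖νr - νs‖ ≤ ‖μr - μs‖ + δ := by
    linarith [norm_le_norm_add_norm_sub (μr - μs) (νr - νs)]
  rw [ge_iff_le, div_le_iff₀ (by positivity)]
  nlinarith [mul_le_mul_of_nonneg_left hu hδpos.le, mul_le_mul_of_nonneg_left hw hδpos.le,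
    mul_le_mul_of_nonneg_left hdw (norm_nonneg ((2 : ℝ) • x - μs - μr)),
    mul_le_mul_of_nonneg_right hdu (norm_nonneg (νr - νs))]

theorem misclassified_point_far_from_center
    {d : ℕ} (μr μs νr νs x : Pt d) (Δ : ℝ)
    (hne : μr ≠ μs) (hΔpos : 0 < Δ) (hΔle : Δ ≤ ‖μr - μs‖)
    (hδpos : 0 < ‖νr - μr‖ + ‖νs - μs‖)
    (hδle : ‖νr - μr‖ + ‖νs - μs‖ ≤ Δ / 16)
    (hprox : ‖lineProj μr μs x - μs‖ - ‖lineProj μr μs x - μr‖ ≥ Δ)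
    (hassign : ‖x - νs‖ ≤ ‖x - νr‖) :
    ‖x - μr‖ ≥ Δ * ‖μr - μs‖ / (64 * (‖νr - μr‖ + ‖νs - μs‖)) :=
  misclassified_point_far_from_center_general μr μs νr νs x Δ hΔpos hΔle hδpos hδle hprox hassign
end
end

section
/- Suppose T_1,…,T_k is an optimal k-means clustering of the rows of A (so Δ_k = ‖A−C‖_F² is the optimal k-means cost with k centers), let Δ_{k−1} be the optimal (k−1)-means cost of the rows of A, and suppose Δ_k ≤ ε·Δ_{k−1} for some 0 < ε ≤ 1/2. Then for all r and all s ≠ r, |μ_r − μ_s|² ≥ ‖A−C‖_F² / (2·ε·n_r). -/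
open scoped BigOperators

noncomputable section

/-- The Frobenius norm of a real matrix. -/
def frobNorm {n d : ℕ} (M : Matrix (Fin n) (Fin d) ℝ) : ℝ :=
  Real.sqrt (∑ i, ∑ j, (M i j) ^ 2)

/-- The `k`-means cost of the points `p i` with centers `ν j`. -/
def kmeansCost {n d k : ℕ} (p : Fin n → Pt d) (ν : Fin k → Pt d) : ℝ :=
  ∑ i, ⨅ j, ‖p i - ν j‖ ^ 2

/-- The optimal `j`-means cost of the points `p i`. -/
def optCost {n d : ℕ} (p : Fin n → Pt d) (j : ℕ) : ℝ :=
  ⨅ ν : Fin j → Pt d, kmeansCost p ν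

/-
The sum of squared distances from points `a_i`, `i ∈ X`, to a center `x` exceeds the sum to their
mean `m` by exactly `|X| |m - x|²`. Merging cluster `T r` into `T s` therefore produces a
`(k-1)`-clustering of cost `Δ_k + n_r |μ_r - μ_s|²`, so `Δ_k ≤ ε Δ_{k-1} ≤ ε (Δ_k + n_r |μ_r - μ_s|²)`;
with `ε ≤ 1/2` this rearranges to `Δ_k ≤ 2 ε n_r |μ_r - μ_s|²`.
-/

section Centroid

variable {ι E : Type*} [NormedAddCommGroup E] [InnerProductSpace ℝ E]

theorem Finset.sum_sub_inv_card_smul_sum_eq_zero (s : Finset ι) (f : ι → E) :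
    ∑ i ∈ s, (f i - (s.card : ℝ)⁻¹ • ∑ j ∈ s, f j) = 0 := by
  rcases s.eq_empty_or_nonempty with rfl | hs
  · simp
  rw [Finset.sum_sub_distrib, Finset.sum_const, ← Nat.cast_smul_eq_nsmul ℝ, smul_smul,
    mul_inv_cancel₀ (by exact_mod_cast hs.card_pos.ne'), one_smul, sub_self]

theorem Finset.sum_norm_sub_sq_eq_sum_norm_sub_mean_sq_add (s : Finset ι) (f : ι → E) (x : E) :
    let m := (s.card : ℝ)⁻¹ • ∑ j ∈ s, f j
    ∑ i ∈ s, ‖f i - x‖ ^ 2 = ∑ i ∈ s, ‖f i - m‖ ^ 2 + s.card * ‖m - x‖ ^ 2 := by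
  intro m
  have hdev : ∑ i ∈ s, (f i - m) = 0 := s.sum_sub_inv_card_smul_sum_eq_zero f
  have expand : ∀ i, ‖f i - x‖ ^ 2 = ‖f i - m‖ ^ 2 + 2 * inner ℝ (f i - m) (m - x) + ‖m - x‖ ^ 2 := by
    intro i
    rw [← norm_add_sq_real, sub_add_sub_cancel]
  simp only [expand, Finset.sum_add_distrib, ← Finset.mul_sum, ← sum_inner, hdev, inner_zero_left,
    mul_zero, add_zero, Finset.sum_const, nsmul_eq_mul]

end Centroid

section KMeans

variable {n d : ℕ}

theorem frobNorm_diffM_sq (p q : Fin n → Pt d) :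
    frobNorm (diffM p q) ^ 2 = ∑ i, ‖p i - q i‖ ^ 2 := by
  unfold frobNorm diffM
  rw [Real.sq_sqrt (by positivity)]
  refine Finset.sum_congr rfl fun i _ => ?_
  simp [EuclideanSpace.norm_eq, Real.sq_sqrt, Finset.sum_nonneg, sq_nonneg]

theorem kmeansCost_nonneg {k : ℕ} (p : Fin n → Pt d) (ν : Fin k → Pt d) :
    0 ≤ kmeansCost p ν :=
  Finset.sum_nonneg fun _ _ => Real.iInf_nonneg fun _ => by positivity

theorem optCost_le_sum_norm_sub_sq {k : ℕ} (p c : Fin n → Pt d) (ν : Fin k → Pt d)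
    (hc : ∀ i, ∃ j, ν j = c i) : optCost p k ≤ ∑ i, ‖p i - c i‖ ^ 2 := by
  refine (ciInf_le ⟨0, ?_⟩ ν).trans (Finset.sum_le_sum fun i _ => ?_)
  · rintro _ ⟨ν', rfl⟩
    exact kmeansCost_nonneg p ν'
  · obtain ⟨j, hj⟩ := hc i
    exact (ciInf_le ⟨0, by rintro _ ⟨_, rfl⟩; positivity⟩ j).trans_eq (by rw [hj])

theorem optCost_sub_one_le_merged_cost {k : ℕ} (A C : Fin n → Pt d) (T : Fin k → Finset (Fin n))
    (μ : Fin k → Pt d) (hcover : ∀ i, ∃ t, i ∈ T t) (hC : ∀ i t, i ∈ T t → C i = μ t)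
    {r s : Fin k} (hμr : μ r = fmean A (T r)) (hsr : s ≠ r) :
    optCost A (k - 1) ≤ ∑ i, ‖A i - C i‖ ^ 2 + (T r).card * ‖μ r - μ s‖ ^ 2 := by
  obtain ⟨m, rfl⟩ := Nat.exists_eq_add_one_of_ne_zero r.pos.ne'
  let c i := if i ∈ T r then μ s else C i
  have hcenters : ∀ i, ∃ j, μ (r.succAbove j) = c i := by
    intro i
    by_cases hi : i ∈ T r
    · obtain ⟨j, hj⟩ := Fin.exists_succAbove_eq hsr
      exact ⟨j, by simp [c, hi, hj]⟩
    · obtain ⟨t, ht⟩ := hcover i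
      obtain ⟨j, hj⟩ := Fin.exists_succAbove_eq (fun h : t = r => hi (h ▸ ht))
      exact ⟨j, by simp [c, hi, hj, hC i t ht]⟩
  have hcost : ∑ i, ‖A i - c i‖ ^ 2 = ∑ i, ‖A i - C i‖ ^ 2 + (T r).card * ‖μ r - μ s‖ ^ 2 := by
    have hmerged : ∑ i ∈ T r, ‖A i - μ s‖ ^ 2
        = ∑ i ∈ T r, ‖A i - C i‖ ^ 2 + (T r).card * ‖μ r - μ s‖ ^ 2 := by
      rw [(T r).sum_norm_sub_sq_eq_sum_norm_sub_mean_sq_add A (μ s), ← fmean, ← hμr]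
      congr 1
      exact Finset.sum_congr rfl fun i hi => by rw [hC i r hi]
    have hinside : ∑ i ∈ T r, ‖A i - c i‖ ^ 2 = ∑ i ∈ T r, ‖A i - μ s‖ ^ 2 :=
      Finset.sum_congr rfl fun i hi => by simp [c, hi]
    have houtside : ∑ i ∈ (T r)ᶜ, ‖A i - c i‖ ^ 2 = ∑ i ∈ (T r)ᶜ, ‖A i - C i‖ ^ 2 :=
      Finset.sum_congr rfl fun i hi => by simp [c, Finset.mem_compl.mp hi]
    rw [← (T r).sum_add_sum_compl, ← (T r).sum_add_sum_compl, hinside, houtside, hmerged]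
    ring
  simpa [hcost] using optCost_le_sum_norm_sub_sq A c _ hcenters

end KMeans

theorem ORSS_condition_implies_separation
    {n d k : ℕ} (ε : ℝ) (A C : Fin n → Pt d) (T : Fin k → Finset (Fin n))
    (μ : Fin k → Pt d)
    (hpart : ∀ i, ∃! r, i ∈ T r)
    (hμ : ∀ r, μ r = fmean A (T r))
    (hC : ∀ i r, i ∈ T r → C i = μ r)
    (hopt : frobNorm (diffM A C) ^ 2 = optCost A k)
    (hεpos : 0 < ε) (hεle : ε ≤ 1 / 2)
    (hsep : optCost A k ≤ ε * optCost A (k - 1)) :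
    ∀ r s, s ≠ r →
      frobNorm (diffM A C) ^ 2 / (2 * ε * (T r).card) ≤ ‖μ r - μ s‖ ^ 2 := by
  intro r s hsr
  set Δ := frobNorm (diffM A C) ^ 2 with hΔdef
  have hmerge : optCost A (k - 1) ≤ Δ + (T r).card * ‖μ r - μ s‖ ^ 2 := by
    rw [hΔdef, frobNorm_diffM_sq]
    exact optCost_sub_one_le_merged_cost A C T μ (fun i => (hpart i).exists) hC (hμ r) hsr
  have hΔ : Δ ≤ ε * (Δ + (T r).card * ‖μ r - μ s‖ ^ 2) :=
    (hopt.trans_le hsep).trans (mul_le_mul_of_nonneg_left hmerge hεpos.le)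
  rcases Nat.eq_zero_or_pos (T r).card with hcard | hcard
  · simp [hcard]
  rw [div_le_iff₀ (by positivity)]
  calc Δ ≤ 2 * (1 - ε) * Δ := by nlinarith [(by positivity : 0 ≤ Δ)]
    _ ≤ ‖μ r - μ s‖ ^ 2 * (2 * ε * (T r).card) := by linarith
end
end

section
/- For every k, every sufficiently large constant c (used in the definition of Δ_rs), and every w > 0 there is a constant c₀ such that the following holds. Suppose n_r ≥ w·n for all r, and |μ_r − μ′_r| ≤ c·√(kεn)·‖A−C‖/n_r for all r, where μ′_r is the mean of S_r and S_1,…,S_k is the nearest-center partition induced by centers ν_1,…,ν_k with δ_t = |μ_t − ν_t| ≤ 800·√(kεn)·‖A−C‖/n_t for all t and δ_r + δ_s ≤ Δ_rs/16 for all r ≠ s. Then for every point A_i that satisfies the proximity condition but belongs to T_r ∩ S_s with s ≠ r (i.e., is misclassified), α′(A_i) ≤ (1 + c₀·ε)·α(A_i). -/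
/-!
Proximity of `A i` to `μ r`, read through Pythagoras on the line through `μ r` and `μ t`,
gives `|A i - μ t|² ≥ |A i - μ r|² + Δ_rt²`; so `α(A i) = |A i - μ r|²`. If `A i` is
nevertheless closer to `ν s` than to `ν r`, then `|A i - μ s| ≤ |A i - μ r| + δ_r + δ_s`, and
`δ_r + δ_s ≤ Δ_rs / 16` forces `Δ_rs² ≲ |A i - μ r| (δ_r + δ_s)` and `Δ_rs ≤ |A i - μ r| / 4`.
As `Δ_rs ≥ 2ck‖A - C‖/√n` while `δ_r + δ_s` and `|μ r - μ' r|` are `O(√(kεn)‖A - C‖/(wn))`,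
the point is so far from `μ r` that moving the centre to `μ' r` changes its squared distance
only by the factor `1 + ε / w²`.
-/

open scoped BigOperators

noncomputable section

/-- The separation parameter `Δ_{rs} = (ck/√n_r + ck/√n_s)·‖A − C‖`. -/
def Dlt {n d k : ℕ} (c : ℝ) (A C : Fin n → Pt d) (T : Fin k → Finset (Fin n))
    (r s : Fin k) : ℝ :=
  (c * k / Real.sqrt (T r).card + c * k / Real.sqrt (T s).card) * specNorm (diffM A C)

/-- The proximity condition for the point `A i`: for every `s ≠ r`, where `T r` is the
cluster of `i`, the projection of `A i` on the line through `μ r` and `μ s` is at least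
`Δ_{rs}` closer to `μ r` than to `μ s`. -/
def ProxPt {n d k : ℕ} (c : ℝ) (A C : Fin n → Pt d) (T : Fin k → Finset (Fin n))
    (μ : Fin k → Pt d) (i : Fin n) : Prop :=
  ∀ r, i ∈ T r → ∀ s, s ≠ r →
    ‖lineProj (μ r) (μ s) (A i) - μ s‖ - ‖lineProj (μ r) (μ s) (A i) - μ r‖
      ≥ Dlt c A C T r s

lemma specNorm_nonneg {n d : ℕ} (M : Matrix (Fin n) (Fin d) ℝ) : 0 ≤ specNorm M :=
  norm_nonneg _

lemma specNorm_diffM_eq_zero_iff {n d : ℕ} {p q : Fin n → Pt d} :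
    specNorm (diffM p q) = 0 ↔ p = q := by
  rw [specNorm, norm_eq_zero, LinearEquiv.map_eq_zero_iff, LinearEquiv.map_eq_zero_iff]
  constructor
  · intro h
    funext i
    ext j
    simpa [diffM, sub_eq_zero] using congrFun (congrFun h i) j
  · rintro rfl
    ext i j
    simp [diffM]

lemma inner_sub_lineProj_eq_zero {d : ℕ} (a b x : Pt d) :
    inner ℝ (x - lineProj a b x) (b - a) = (0 : ℝ) := by
  rcases eq_or_ne b a with rfl | hba
  · simp
  have hba2 : ‖b - a‖ ^ 2 ≠ 0 := by positivity [sub_ne_zero.2 hba]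
  rw [lineProj, sub_add_eq_sub_sub, inner_sub_left, real_inner_smul_left,
    real_inner_self_eq_norm_sq, div_mul_cancel₀ _ hba2, sub_self]

lemma norm_sub_lineMap_sq {d : ℕ} (a b x : Pt d) (t : ℝ) :
    ‖x - AffineMap.lineMap a b t‖ ^ 2
      = ‖x - lineProj a b x‖ ^ 2 + ‖lineProj a b x - AffineMap.lineMap a b t‖ ^ 2 := by
  have hproj : lineProj a b x - AffineMap.lineMap a b t
      = ((inner ℝ (x - a) (b - a) : ℝ) / ‖b - a‖ ^ 2 - t) • (b - a) := by
    rw [lineProj, AffineMap.lineMap_apply_module]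
    module
  have horth :
      inner ℝ (x - lineProj a b x) (lineProj a b x - AffineMap.lineMap a b t) = (0 : ℝ) := by
    rw [hproj, real_inner_smul_right, inner_sub_lineProj_eq_zero, mul_zero]
  have h := norm_add_sq_real (x - lineProj a b x) (lineProj a b x - AffineMap.lineMap a b t)
  rw [sub_add_sub_cancel, horth] at h
  linarith

lemma norm_sub_sq_add_sq_le_of_lineProj {d : ℕ} {a b x : Pt d} {Δ : ℝ} (hΔ : 0 ≤ Δ)
    (h : ‖lineProj a b x - b‖ - ‖lineProj a b x - a‖ ≥ Δ) :
    ‖x - a‖ ^ 2 + Δ ^ 2 ≤ ‖x - b‖ ^ 2 := by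
  have ha := norm_sub_lineMap_sq a b x 0
  have hb := norm_sub_lineMap_sq a b x 1
  rw [AffineMap.lineMap_apply_zero] at ha
  rw [AffineMap.lineMap_apply_one] at hb
  nlinarith [norm_nonneg (lineProj a b x - a)]

lemma norm_sub_le_of_norm_sub_le {E : Type*} [SeminormedAddCommGroup E] {x a b a' b' : E}
    (h : ‖x - b'‖ ≤ ‖x - a'‖) : ‖x - b‖ ≤ ‖x - a‖ + (‖a - a'‖ + ‖b - b'‖) := by
  have hb := norm_sub_le_norm_sub_add_norm_sub x b' b
  have ha := norm_sub_le_norm_sub_add_norm_sub x a a'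
  rw [norm_sub_rev b'] at hb
  linarith

lemma iInf_sq_norm_sub_le {ι E : Type*} [Finite ι] [SeminormedAddCommGroup E] (x : E)
    (y z : ι → E) (r : ι) {H : ℝ} (h : ‖y r - z r‖ ≤ H) :
    (⨅ t, ‖x - z t‖ ^ 2) ≤ (‖x - y r‖ + H) ^ 2 := by
  have hbdd : BddBelow (Set.range fun t => ‖x - z t‖ ^ 2) :=
    ⟨0, by rintro _ ⟨t, rfl⟩; positivity⟩
  refine (ciInf_le hbdd r).trans (pow_le_pow_left₀ (norm_nonneg _) ?_ 2)
  linarith [norm_sub_le_norm_sub_add_norm_sub x (y r) (z r)]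

lemma sq_le_four_mul_and_four_mul_le {P Δ D : ℝ} (hP : 0 ≤ P) (hD : 0 ≤ D)
    (h : P ^ 2 + Δ ^ 2 ≤ (P + D) ^ 2) (hDΔ : D ≤ Δ / 16) :
    Δ ^ 2 ≤ 4 * (P * D) ∧ 4 * Δ ≤ P := by
  have hΔPD : Δ ^ 2 ≤ 4 * (P * D) := by nlinarith
  refine ⟨hΔPD, ?_⟩
  nlinarith [mul_le_mul_of_nonneg_left hDΔ hP]

-- `6400 = 4 · 1600` is what turns `β ≤ 1600 P x` into `4 c x ≤ η P`.
lemma sq_add_mul_le_one_add_mul_sq {P x β η c k : ℝ} (hk : 1 ≤ k) (hck : 6400 ≤ c * k)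
    (hP : 0 ≤ P) (hx : 0 < x) (hβ : 0 ≤ β) (hxβ : c ^ 2 * k * x ^ 2 = η * β)
    (hβx : β ≤ 1600 * (P * x)) (hβP : 2 * β ≤ P ^ 2) :
    (P + c * x) ^ 2 ≤ (1 + η) * P ^ 2 := by
  have hc : 0 < c := by nlinarith
  have hη : 0 ≤ η := by
    by_contra! hη
    nlinarith [mul_pos (mul_pos (pow_pos hc 2) (by linarith : (0:ℝ) < k)) (pow_pos hx 2)]
  have hlin : 4 * (c * x) ≤ η * P := by
    have : 1600 * x * (4 * (c * x)) ≤ 1600 * x * (η * P) := by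
      nlinarith [mul_le_mul_of_nonneg_right hck (by positivity : 0 ≤ c * x ^ 2),
        mul_le_mul_of_nonneg_left hβx hη]
    exact le_of_mul_le_mul_left this (by positivity)
  have hquad : 2 * (c * x) ^ 2 ≤ η * P ^ 2 := by
    nlinarith [mul_le_mul_of_nonneg_left hβP hη,
      mul_le_mul_of_nonneg_left hk (by positivity : 0 ≤ c ^ 2 * x ^ 2)]
  nlinarith [mul_le_mul_of_nonneg_left hlin hP]

lemma sq_add_mul_sqrt_div_le {c k ε n M w P D : ℝ} (hk : 1 ≤ k) (hck : 6400 ≤ c * k)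
    (hn : 0 < n) (hw : 0 < w) (hM : 0 < M) (hP : 0 ≤ P)
    (hβD : (c * k) ^ 2 * M ^ 2 / n ≤ P * D) (hβP : 2 * ((c * k) ^ 2 * M ^ 2 / n) ≤ P ^ 2)
    (hD : D ≤ 1600 * (Real.sqrt (k * ε * n) * M / (w * n))) :
    (P + c * (Real.sqrt (k * ε * n) * M / (w * n))) ^ 2 ≤ (1 + 1 / w ^ 2 * ε) * P ^ 2 := by
  set x := Real.sqrt (k * ε * n) * M / (w * n) with hx_def
  set β := (c * k) ^ 2 * M ^ 2 / n with hβ_def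
  have hβ : 0 < β := by
    have : 0 < c * k := by linarith
    positivity
  have hx : 0 < x := by nlinarith
  have hkεn : 0 < k * ε * n :=
    Real.sqrt_pos.1 (pos_of_mul_pos_left ((div_pos_iff_of_pos_right (by positivity)).1 hx) hM.le)
  have hxβ : c ^ 2 * k * x ^ 2 = 1 / w ^ 2 * ε * β := by
    rw [hx_def, hβ_def, div_pow, mul_pow, Real.sq_sqrt hkεn.le]
    field_simp
  exact sq_add_mul_le_one_add_mul_sq hk hck hP hx hβ.le hxβ (by nlinarith) hβP

section Proximity

variable {n d k : ℕ} {c : ℝ} {A C : Fin n → Pt d} {T : Fin k → Finset (Fin n)}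

lemma Dlt_nonneg (hc : 0 ≤ c) (r s : Fin k) : 0 ≤ Dlt c A C T r s :=
  mul_nonneg (by positivity) (specNorm_nonneg _)

lemma four_mul_le_sq_Dlt (hc : 0 ≤ c) (hT : ∀ t, 0 < (T t).card) (r s : Fin k) :
    4 * ((c * k) ^ 2 * specNorm (diffM A C) ^ 2 / n) ≤ Dlt c A C T r s ^ 2 := by
  have hcard : ∀ t, ((T t).card : ℝ) ≤ n := fun t => by
    exact_mod_cast (Finset.card_le_univ (T t)).trans_eq (Fintype.card_fin n)
  have hle : ∀ t, c * k / Real.sqrt n ≤ c * k / Real.sqrt (T t).card := fun t =>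
    div_le_div_of_nonneg_left (by positivity) (by simpa using hT t) (Real.sqrt_le_sqrt (hcard t))
  have h2 : 2 * (c * k / Real.sqrt n) * specNorm (diffM A C) ≤ Dlt c A C T r s := by
    rw [Dlt, two_mul]
    exact mul_le_mul_of_nonneg_right (add_le_add (hle r) (hle s)) (specNorm_nonneg _)
  calc 4 * ((c * k) ^ 2 * specNorm (diffM A C) ^ 2 / n)
      = (2 * (c * k / Real.sqrt n) * specNorm (diffM A C)) ^ 2 := by
        rw [show (2 * (c * k / Real.sqrt n) * specNorm (diffM A C)) ^ 2
          = 4 * ((c * k) ^ 2 * specNorm (diffM A C) ^ 2 / Real.sqrt n ^ 2) by ring,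
          Real.sq_sqrt (Nat.cast_nonneg n)]
    _ ≤ Dlt c A C T r s ^ 2 := pow_le_pow_left₀ (by positivity [specNorm_nonneg (diffM A C)]) h2 2

variable {μ : Fin k → Pt d} {i : Fin n} {r : Fin k}

lemma sq_norm_sub_add_sq_Dlt_le (hc : 0 ≤ c) (hprox : ProxPt c A C T μ i) (hi : i ∈ T r)
    {t : Fin k} (ht : t ≠ r) :
    ‖A i - μ r‖ ^ 2 + Dlt c A C T r t ^ 2 ≤ ‖A i - μ t‖ ^ 2 :=
  norm_sub_sq_add_sq_le_of_lineProj (Dlt_nonneg hc r t) (hprox r hi t ht)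

lemma iInf_sq_norm_sub_eq_of_proxPt (hc : 0 ≤ c) (hprox : ProxPt c A C T μ i) (hi : i ∈ T r) :
    (⨅ t, ‖A i - μ t‖ ^ 2) = ‖A i - μ r‖ ^ 2 := by
  have : Nonempty (Fin k) := ⟨r⟩
  refine le_antisymm (ciInf_le ⟨0, by rintro _ ⟨t, rfl⟩; positivity⟩ r) (le_ciInf fun t => ?_)
  rcases eq_or_ne t r with rfl | ht
  · exact le_rfl
  · nlinarith [sq_norm_sub_add_sq_Dlt_le hc hprox hi ht]

variable {ν : Fin k → Pt d} {s : Fin k}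

lemma norm_sub_center_bounds_of_misclassified (hc : 0 ≤ c) (hT : ∀ t, 0 < (T t).card)
    (hprox : ProxPt c A C T μ i) (hi : i ∈ T r) (hrs : r ≠ s)
    (hnear : ‖A i - ν s‖ ≤ ‖A i - ν r‖)
    (hδ : ‖μ r - ν r‖ + ‖μ s - ν s‖ ≤ Dlt c A C T r s / 16) :
    (c * k) ^ 2 * specNorm (diffM A C) ^ 2 / n
        ≤ ‖A i - μ r‖ * (‖μ r - ν r‖ + ‖μ s - ν s‖) ∧
      2 * ((c * k) ^ 2 * specNorm (diffM A C) ^ 2 / n) ≤ ‖A i - μ r‖ ^ 2 := by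
  have hβΔ := four_mul_le_sq_Dlt (A := A) (C := C) hc hT r s
  have hΔ := Dlt_nonneg (A := A) (C := C) (T := T) hc r s
  have hPΔD := (sq_norm_sub_add_sq_Dlt_le hc hprox hi hrs.symm).trans
    (pow_le_pow_left₀ (norm_nonneg _) (norm_sub_le_of_norm_sub_le (a := μ r) hnear) 2)
  obtain ⟨hΔPD, hΔP⟩ := sq_le_four_mul_and_four_mul_le (norm_nonneg _) (by positivity) hPΔD hδ
  constructor <;> nlinarith

end Proximity

theorem misclassified_proximate_points_cost_approximation
    (k : ℕ) : ∃ c₁ : ℝ, ∀ c : ℝ, c₁ ≤ c → ∀ w : ℝ, 0 < w → ∃ c₀ : ℝ,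
    ∀ {n d : ℕ} (ε : ℝ) (A C : Fin n → Pt d) (T S : Fin k → Finset (Fin n))
      (μ ν μ' : Fin k → Pt d),
      (∀ i, ∃! r, i ∈ T r) →
      (∀ r, μ r = fmean A (T r)) →
      (∀ i r, i ∈ T r → C i = μ r) →
      (∀ r, w * n ≤ ((T r).card : ℝ)) →
      (∀ r t, ‖μ r - ν r‖ ≤ ‖μ r - ν t‖) →
      (∀ i, ∃! s, i ∈ S s) →
      (∀ s, ∀ i ∈ S s, ∀ t, ‖A i - ν s‖ ≤ ‖A i - ν t‖) →
      (∀ s, μ' s = fmean A (S s)) →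
      (∀ t, ‖μ t - ν t‖ ≤
        800 * Real.sqrt (k * ε * n) * specNorm (diffM A C) / (T t).card) →
      (∀ r s, r ≠ s → ‖μ r - ν r‖ + ‖μ s - ν s‖ ≤ Dlt c A C T r s / 16) →
      (∀ r, ‖μ r - μ' r‖ ≤
        c * Real.sqrt (k * ε * n) * specNorm (diffM A C) / (T r).card) →
      ∀ i r s, r ≠ s → i ∈ T r → i ∈ S s → ProxPt c A C T μ i →
        (⨅ t, ‖A i - μ' t‖ ^ 2) ≤ (1 + c₀ * ε) * ⨅ t, ‖A i - μ t‖ ^ 2 := by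
  refine ⟨6400, fun c hc w hw => ⟨1 / w ^ 2, ?_⟩⟩
  intro n d ε A C T S μ ν μ' _ _ hC hwT _ _ hS _ hδ hδΔ hμ' i r s hrs hiT hiS hprox
  have hc0 : 0 ≤ c := by linarith
  have hn : 0 < (n : ℝ) := Nat.cast_pos.2 i.pos
  have hk : 1 ≤ (k : ℝ) := Nat.one_le_cast.2 r.pos
  have hscale : ∀ a, 0 ≤ a → ∀ t, a * Real.sqrt (k * ε * n) * specNorm (diffM A C) / (T t).card
      ≤ a * (Real.sqrt (k * ε * n) * specNorm (diffM A C) / (w * n)) := fun a ha t => by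
    rw [← mul_div_assoc, ← mul_assoc]
    exact div_le_div_of_nonneg_left
      (by positivity [specNorm_nonneg (diffM A C)]) (by positivity) (hwT t)
  rw [iInf_sq_norm_sub_eq_of_proxPt hc0 hprox hiT]
  refine (iInf_sq_norm_sub_le (A i) μ μ' r ((hμ' r).trans (hscale c hc0 r))).trans ?_
  rcases (specNorm_nonneg (diffM A C)).eq_or_lt with hM | hM
  · rw [← hM]
    simp [specNorm_diffM_eq_zero_iff.1 hM.symm, hC i r hiT]
  obtain ⟨hβD, hβP⟩ := norm_sub_center_bounds_of_misclassified hc0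
    (fun t => by exact_mod_cast (mul_pos hw hn).trans_le (hwT t)) hprox hiT hrs (hS s i hiS r)
    (hδΔ r s hrs)
  exact sq_add_mul_sqrt_div_le hk (by nlinarith) hn hw hM (norm_nonneg _) hβD hβP
    (by linarith [(hδ r).trans (hscale 800 (by norm_num) r),
      (hδ s).trans (hscale 800 (by norm_num) s)])
end
end

section
/- Let B_1,…,B_n ∈ ℝ^d be points partitioned into clusters T_1,…,T_k, where cluster T_r has size w_r·n and mean μ_r ∈ ℝ^d, and let μ = Σ_r w_r·μ_r and w_min = min_r w_r. For each r define θ_r ∈ ℝ^n by (θ_r)_j = (μ_r − μ)·(B_j − μ). Assume that for every pair r ≠ s, with v the unit vector along μ_r − μ_s, Σ_{i ∈ T_r} [ (B_i − μ_r)·v ]² ≤ (|μ_r − μ_s|²/16)·w_r·n. Then for all r ≠ s, |θ_r − θ_s| ≥ (|μ_r − μ_s|²/4)·√(w_min)·√n. -/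
open scoped BigOperators

noncomputable section

open scoped RealInnerProductSpace

/-!
With `u = μ r - μ s`, the `j`-th coordinate of `θ r - θ s` is `⟪u, B j - μbar⟫`. On a cluster
`T t` this splits as `⟪u, B j - μ t⟫ + ⟪u, μ t - μbar⟫`, and the first summands add up to zero,
so the squares over `T t` sum to at least `|T t| ⟪u, μ t - μbar⟫² ≥ wmin n ⟪u, μ t - μbar⟫²`.
Since `⟪u, μ r - μbar⟫ - ⟪u, μ s - μbar⟫ = ‖u‖²`, one of the clusters `T r`, `T s` already
forces `‖θ r - θ s‖ ≥ ‖u‖² √(wmin n) / 2`.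
-/

lemma sqrt_mul_abs_le_of_mul_sq_le {a x y : ℝ} (h : a * x ^ 2 ≤ y ^ 2) (hy : 0 ≤ y) :
    √a * |x| ≤ y := by
  rcases lt_or_ge a 0 with ha | ha
  · simp [Real.sqrt_eq_zero'.mpr ha.le, hy]
  · calc √a * |x| = √(a * x ^ 2) := by rw [Real.sqrt_mul ha, Real.sqrt_sq_eq_abs]
      _ ≤ √(y ^ 2) := Real.sqrt_le_sqrt h
      _ = y := Real.sqrt_sq hy

lemma EuclideanSpace.sum_sq_apply_le_norm_sq {ι : Type*} [Fintype ι]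
    (v : EuclideanSpace ℝ ι) (X : Finset ι) : ∑ j ∈ X, v j ^ 2 ≤ ‖v‖ ^ 2 := by
  rw [EuclideanSpace.norm_sq_eq]
  simp only [Real.norm_eq_abs, sq_abs]
  exact Finset.sum_le_sum_of_subset_of_nonneg (Finset.subset_univ X) fun j _ _ => sq_nonneg _

section fmean

variable {n d : ℕ} (B : Fin n → Pt d) (X : Finset (Fin n))

lemma sum_sub_fmean_eq_zero : ∑ i ∈ X, (B i - fmean B X) = 0 := by
  rcases X.eq_empty_or_nonempty with rfl | hX
  · simp
  rw [Finset.sum_sub_distrib, Finset.sum_const, ← Nat.cast_smul_eq_nsmul ℝ, fmean, smul_smul,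
    mul_inv_cancel₀ (by exact_mod_cast hX.card_ne_zero), one_smul, sub_self]

lemma card_mul_sq_inner_fmean_sub_le (u c : Pt d) :
    X.card * ⟪u, fmean B X - c⟫ ^ 2 ≤ ∑ i ∈ X, ⟪u, B i - c⟫ ^ 2 := by
  set γ := ⟪u, fmean B X - c⟫
  have hsplit : ∀ i, ⟪u, B i - c⟫ = ⟪u, B i - fmean B X⟫ + γ := fun i => by
    rw [← inner_add_right, sub_add_sub_cancel]
  have hcentered : ∑ i ∈ X, ⟪u, B i - fmean B X⟫ = 0 := by
    rw [← inner_sum, sum_sub_fmean_eq_zero, inner_zero_right]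
  have hexpand : ∑ i ∈ X, ⟪u, B i - c⟫ ^ 2
      = ∑ i ∈ X, ⟪u, B i - fmean B X⟫ ^ 2 + 2 * γ * ∑ i ∈ X, ⟪u, B i - fmean B X⟫
        + X.card * γ ^ 2 := by
    simp only [hsplit, add_sq, Finset.sum_add_distrib, Finset.sum_const, nsmul_eq_mul,
      Finset.mul_sum]
    congr 1; congr 1
    exact Finset.sum_congr rfl fun i _ => by ring
  rw [hexpand, hcentered, mul_zero, add_zero, le_add_iff_nonneg_left]
  exact Finset.sum_nonneg fun i _ => sq_nonneg _

end fmean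

theorem boosting_amplifies_center_separation_general
    {n d k : ℕ} (B : Fin n → Pt d) (T : Fin k → Finset (Fin n))
    (w : Fin k → ℝ) (μ : Fin k → Pt d) (μbar : Pt d) (wmin : ℝ)
    (θ : Fin k → EuclideanSpace ℝ (Fin n))
    (hcard : ∀ r, ((T r).card : ℝ) = w r * n)
    (hμ : ∀ r, μ r = fmean B (T r))
    (hwmin : IsLeast (Set.range w) wmin)
    (hθ : ∀ r j, θ r j = (inner ℝ (μ r - μbar) (B j - μbar) : ℝ)) :
    ∀ r s, r ≠ s →
      ‖μ r - μ s‖ ^ 2 / 4 * Real.sqrt wmin * Real.sqrt n ≤ ‖θ r - θ s‖ := by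
  intro r s _
  set u := μ r - μ s
  set c : Fin k → ℝ := fun t => ⟪u, μ t - μbar⟫
  have hθsub : ∀ j, (θ r - θ s) j = ⟪u, B j - μbar⟫ := fun j => by
    rw [PiLp.sub_apply, hθ, hθ, ← inner_sub_left, sub_sub_sub_cancel_right]
  have hcluster : ∀ t, wmin * n * c t ^ 2 ≤ ‖θ r - θ s‖ ^ 2 := fun t => calc
    wmin * n * c t ^ 2 ≤ (T t).card * c t ^ 2 := by
      rw [hcard]; gcongr; exact hwmin.2 ⟨t, rfl⟩
    _ ≤ ∑ j ∈ T t, ⟪u, B j - μbar⟫ ^ 2 := by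
      simpa only [c, hμ t] using card_mul_sq_inner_fmean_sub_le B (T t) u μbar
    _ = ∑ j ∈ T t, (θ r - θ s) j ^ 2 := by simp only [hθsub]
    _ ≤ ‖θ r - θ s‖ ^ 2 := EuclideanSpace.sum_sq_apply_le_norm_sq _ _
  have hgap : c r - c s = ‖u‖ ^ 2 := by
    rw [← inner_sub_right, sub_sub_sub_cancel_right, real_inner_self_eq_norm_sq]
  have hbound : ∀ t, √(wmin * n) * |c t| ≤ ‖θ r - θ s‖ := fun t =>
    sqrt_mul_abs_le_of_mul_sq_le (hcluster t) (norm_nonneg _)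
  calc ‖u‖ ^ 2 / 4 * √wmin * √n = √(wmin * n) * |c r - c s| / 4 := by
        rw [hgap, abs_of_nonneg (sq_nonneg _), Real.sqrt_mul' _ (Nat.cast_nonneg n)]; ring
    _ ≤ (√(wmin * n) * |c r| + √(wmin * n) * |c s|) / 4 := by
        rw [← mul_add]; gcongr; exact abs_sub _ _
    _ ≤ ‖θ r - θ s‖ := by linarith [hbound r, hbound s, norm_nonneg (θ r - θ s)]

theorem boosting_amplifies_center_separation
    {n d k : ℕ} (B : Fin n → Pt d) (T : Fin k → Finset (Fin n))
    (w : Fin k → ℝ) (μ : Fin k → Pt d) (μbar : Pt d) (wmin : ℝ)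
    (θ : Fin k → EuclideanSpace ℝ (Fin n))
    (hpart : ∀ i, ∃! r, i ∈ T r)
    (hw : ∀ r, 0 < w r) (hsum : ∑ r, w r = 1)
    (hcard : ∀ r, ((T r).card : ℝ) = w r * n)
    (hμ : ∀ r, μ r = fmean B (T r))
    (hμbar : μbar = ∑ r, w r • μ r)
    (hwmin : IsLeast (Set.range w) wmin)
    (hθ : ∀ r j, θ r j = (inner ℝ (μ r - μbar) (B j - μbar) : ℝ))
    (hvar : ∀ r s, r ≠ s →
      (∑ i ∈ T r,
        ((inner ℝ (B i - μ r) (‖μ r - μ s‖⁻¹ • (μ r - μ s)) : ℝ)) ^ 2)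
        ≤ ‖μ r - μ s‖ ^ 2 / 16 * (w r * n)) :
    ∀ r s, r ≠ s →
      ‖μ r - μ s‖ ^ 2 / 4 * Real.sqrt wmin * Real.sqrt n ≤ ‖θ r - θ s‖ :=
  boosting_amplifies_center_separation_general B T w μ μbar wmin θ hcard hμ hwmin hθ
end
end
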